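/- arXiv:2310.14463 — 2 statements merged into one kernel-verified Lean document; each statement's English description precedes it below -/
import Mathlib

section
/- For any real x with 0 < xm ≤ π/2 and |x| ≤ xm, the cosine function satisfies cos x ≤ 1 - ((1 - cos xm) / xm²) * x². -/
/-!
Writing `1 - cos x = 2 sin² (x / 2)`, the claim says that `(1 - cos x) / x²` decreases in `|x|`.
This follows from the concavity of `sin` on `[0, π]`: since `sin 0 = 0`, the ratio `sin s / s`
is antitone there.
-/

open Real

namespace Real

theorem mul_sin_le_mul_sin {s t : ℝ} (hs : 0 ≤ s) (hst : s ≤ t) (ht : t ≤ π) :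
    s * sin t ≤ t * sin s := by
  rcases (hs.trans hst).eq_or_lt with rfl | ht0
  · simp [le_antisymm hst hs]
  have hconc := strictConcaveOn_sin_Icc.concaveOn.2 (⟨le_rfl, pi_pos.le⟩ : (0 : ℝ) ∈ Set.Icc 0 π)
    ⟨ht0.le, ht⟩ (sub_nonneg.2 ((div_le_one ht0).2 hst)) (div_nonneg hs ht0.le) (sub_add_cancel 1 _)
  simp only [smul_eq_mul, mul_zero, sin_zero, zero_add, div_mul_cancel₀ s ht0.ne'] at hconc
  calc s * sin t = t * (s / t * sin t) := by field_simp
    _ ≤ t * sin s := by gcongr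

theorem one_sub_cos_eq_two_mul_sin_sq (x : ℝ) : 1 - cos x = 2 * sin (x / 2) ^ 2 := by
  rw [sin_sq_eq_half_sub, mul_div_cancel₀ x two_ne_zero]
  ring

theorem sq_mul_one_sub_cos_le {x a : ℝ} (hx : 0 ≤ x) (hxa : x ≤ a) (ha : a ≤ 2 * π) :
    x ^ 2 * (1 - cos a) ≤ a ^ 2 * (1 - cos x) := by
  have hsin := mul_sin_le_mul_sin (s := x / 2) (t := a / 2) (by positivity) (by linarith)
    (by linarith)
  have hsin_nonneg : 0 ≤ x / 2 * sin (a / 2) :=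
    mul_nonneg (by positivity) (sin_nonneg_of_nonneg_of_le_pi (by linarith) (by linarith))
  rw [one_sub_cos_eq_two_mul_sin_sq, one_sub_cos_eq_two_mul_sin_sq]
  linear_combination 8 * pow_le_pow_left₀ hsin_nonneg hsin 2

end Real

theorem cos_quadratic_upper_general (xm x : ℝ) (hxm : xm ≤ π / 2)
    (hx : |x| ≤ xm) :
    Real.cos x ≤ 1 - ((1 - Real.cos xm) / xm ^ 2) * x ^ 2 := by
  have hmono : x ^ 2 * (1 - cos xm) ≤ xm ^ 2 * (1 - cos x) := by
    simpa only [sq_abs, cos_abs] using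
      sq_mul_one_sub_cos_le (abs_nonneg x) hx (by linarith [pi_pos])
  have hbound : (1 - cos xm) / xm ^ 2 * x ^ 2 ≤ 1 - cos x := by
    rw [div_mul_eq_mul_div]
    exact div_le_of_le_mul₀ (sq_nonneg xm) (sub_nonneg.2 (cos_le_one x)) (by linarith)
  linarith

theorem cos_quadratic_upper (xm x : ℝ) (hxm0 : 0 < xm) (hxm : xm ≤ π / 2)
    (hx : |x| ≤ xm) :
    Real.cos x ≤ 1 - ((1 - Real.cos xm) / xm ^ 2) * x ^ 2 :=
  cos_quadratic_upper_general xm x hxm hx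
end

section
/- For any real xm with 0 < xm ≤ π/2 and any x with -xm ≤ x ≤ xm, we have sin x ≤ cos(xm/2) * (x - xm/2) + sin(xm/2) and sin x ≥ cos(xm/2) * (x + xm/2) - sin(xm/2). -/
/-!
Put `c = xm / 2` and `L x = cos c * (x - c) + sin c`; the lower envelope is the upper one
reflected through the origin, so it suffices to show `sin x ≤ L x` for `|x| ≤ 2c`.
On `[0, 2c] ⊆ [0, π]` this is the tangent-line inequality for the concave function `sin`.
On `[-2c, 0]` it says that `sin y ≥ -L (-y)` for `y ∈ [0, 2c]`; as `sin` is concave there, it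
suffices to check it at the two ends: at `0` it is `c cos c ≤ sin c`, and at `2c` it is
`3c cos c ≤ sin c + sin 2c`, i.e. `3c ≤ tan c + 2 sin c`. The latter holds because
`tan + 2 sin - 3 id` vanishes at `0` and has derivative
`1 / cos² + 2 cos - 3 = (1 - cos)² (1 + 2 cos) / cos² ≥ 0`.
-/

open Real Set

lemma ConcaveOn.le_add_mul_sub_of_hasDerivAt {S : Set ℝ} {f : ℝ → ℝ} {f' c x : ℝ}
    (hf : ConcaveOn ℝ S f) (hc : c ∈ S) (hx : x ∈ S) (hf' : HasDerivAt f f' c) :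
    f x ≤ f c + f' * (x - c) := by
  rcases lt_trichotomy x c with hxc | rfl | hcx
  · have h := hf.le_slope_of_hasDerivAt hx hc hxc hf'
    rw [slope_def_field, le_div_iff₀ (sub_pos.2 hxc)] at h
    linarith
  · simp
  · have h := hf.slope_le_of_hasDerivAt hc hx hcx hf'
    rw [slope_def_field, div_le_iff₀ (sub_pos.2 hcx)] at h
    linarith

lemma ConcaveOn.affine_le_of_mem_Icc {a b m k x : ℝ} {f : ℝ → ℝ}
    (hf : ConcaveOn ℝ (Icc a b) f) (ha : m * a + k ≤ f a) (hb : m * b + k ≤ f b)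
    (hx : x ∈ Icc a b) : m * x + k ≤ f x := by
  have hline : ConvexOn ℝ (Icc a b) fun y => m * y + k :=
    ((LinearMap.mul ℝ ℝ m).convexOn (convex_Icc a b)).add_const k
  have hab := hx.1.trans hx.2
  have hmin := (hf.sub hline).min_le_of_mem_Icc (left_mem_Icc.2 hab) (right_mem_Icc.2 hab) hx
  simp only [Pi.sub_apply] at hmin
  linarith [le_min (sub_nonneg.2 ha) (sub_nonneg.2 hb)]

lemma three_mul_le_tan_add_two_mul_sin {c : ℝ} (h0 : 0 ≤ c) (hc : c < π / 2) :
    3 * c ≤ tan c + 2 * sin c := by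
  have hcos : ∀ t ∈ Icc 0 c, 0 < cos t := fun t ht =>
    cos_pos_of_mem_Ioo ⟨by linarith [pi_pos, ht.1], ht.2.trans_lt hc⟩
  have hderiv : ∀ t ∈ Icc 0 c, HasDerivAt (fun t => tan t + 2 * sin t - 3 * t)
      (1 / cos t ^ 2 + 2 * cos t - 3) t := fun t ht =>
    (((hasDerivAt_tan (hcos t ht).ne').add ((hasDerivAt_sin t).const_mul 2)).sub
      ((hasDerivAt_id t).const_mul 3)).congr_deriv (by simp)
  have hderiv_nonneg : ∀ t ∈ interior (Icc 0 c), 0 ≤ 1 / cos t ^ 2 + 2 * cos t - 3 := by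
    intro t ht
    have hu := hcos t (interior_subset ht)
    have hfactor : 1 / cos t ^ 2 + 2 * cos t - 3
        = (1 - cos t) ^ 2 * (1 + 2 * cos t) / cos t ^ 2 := by
      field_simp
      ring
    rw [hfactor]
    positivity
  have hmono := monotoneOn_of_hasDerivWithinAt_nonneg (convex_Icc 0 c)
    (fun t ht => (hderiv t ht).continuousAt.continuousWithinAt)
    (fun t ht => (hderiv t (interior_subset ht)).hasDerivWithinAt) hderiv_nonneg
    ⟨le_rfl, h0⟩ ⟨h0, le_rfl⟩ h0
  simpa using hmono

lemma three_mul_mul_cos_le_sin_add_sin_two_mul {c : ℝ} (h0 : 0 ≤ c) (hc : c < π / 2) :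
    3 * c * cos c ≤ sin c + sin (2 * c) := by
  have hcos : 0 < cos c := cos_pos_of_mem_Ioo ⟨by linarith [pi_pos], hc⟩
  have h := mul_le_mul_of_nonneg_right (three_mul_le_tan_add_two_mul_sin h0 hc) hcos.le
  rw [tan_eq_sin_div_cos, add_mul, div_mul_cancel₀ _ hcos.ne'] at h
  rw [sin_two_mul]
  linarith

lemma sin_le_cos_mul_sub_add_sin {c x : ℝ} (hc : c ∈ Icc 0 π) (hx : x ∈ Icc 0 π) :
    sin x ≤ cos c * (x - c) + sin c := by
  have h :=
    strictConcaveOn_sin_Icc.concaveOn.le_add_mul_sub_of_hasDerivAt hc hx (hasDerivAt_sin c)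
  linarith

lemma cos_mul_add_sub_sin_le_sin {c y : ℝ} (h0 : 0 ≤ c) (hc : c < π / 2)
    (hy : y ∈ Icc 0 (2 * c)) :
    cos c * (y + c) - sin c ≤ sin y := by
  have hc_mem : c ∈ Icc 0 π := ⟨h0, by linarith [pi_pos]⟩
  have hconcave : ConcaveOn ℝ (Icc 0 (2 * c)) sin :=
    strictConcaveOn_sin_Icc.concaveOn.subset (Icc_subset_Icc_right (by linarith)) (convex_Icc _ _)
  have hleft : c * cos c ≤ sin c := by
    have h := sin_le_cos_mul_sub_add_sin hc_mem (left_mem_Icc.2 pi_pos.le)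
    rw [sin_zero] at h
    linarith
  have hright := three_mul_mul_cos_le_sin_add_sin_two_mul h0 hc
  have h := hconcave.affine_le_of_mem_Icc (m := cos c) (k := c * cos c - sin c)
    (by rw [sin_zero]; linarith) (by linarith) hy
  linarith

lemma sin_le_cos_mul_sub_add_sin_of_abs_le {c x : ℝ} (h0 : 0 ≤ c) (hc : c < π / 2)
    (hx : |x| ≤ 2 * c) : sin x ≤ cos c * (x - c) + sin c := by
  rcases abs_le.1 hx with ⟨hx₁, hx₂⟩
  rcases le_or_gt 0 x with hx₀ | hx₀
  · exact sin_le_cos_mul_sub_add_sin ⟨h0, by linarith⟩ ⟨hx₀, by linarith⟩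
  · have h := cos_mul_add_sub_sin_le_sin h0 hc (y := -x) ⟨by linarith, by linarith⟩
    rw [sin_neg] at h
    linarith

theorem sin_tangent_envelope (xm x : ℝ) (hxm0 : 0 < xm) (hxm : xm ≤ π / 2)
    (hx1 : -xm ≤ x) (hx2 : x ≤ xm) :
    Real.sin x ≤ Real.cos (xm / 2) * (x - xm / 2) + Real.sin (xm / 2) ∧
    Real.sin x ≥ Real.cos (xm / 2) * (x + xm / 2) - Real.sin (xm / 2) := by
  have h0 : 0 ≤ xm / 2 := by positivity
  have hc : xm / 2 < π / 2 := by linarith [pi_pos]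
  have hx : |x| ≤ 2 * (xm / 2) := abs_le.2 ⟨by linarith, by linarith⟩
  have hnegx : |-x| ≤ 2 * (xm / 2) := by rwa [abs_neg]
  have hlower := sin_le_cos_mul_sub_add_sin_of_abs_le h0 hc hnegx
  rw [sin_neg] at hlower
  exact ⟨sin_le_cos_mul_sub_add_sin_of_abs_le h0 hc hx, by linarith⟩
end
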